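/- Decay of the Nesterov Lyapunov function: every solution of the Nesterov system satisfies V₁((z₁(t), z₂(t)), t) ≤ (9/(t+2)²)·V₁((z₁(1), z₂(1)), 1) for all t ≥ 1. -/

import Mathlib

/-! The scaled energy `E t = (t + 2)² V₁ (z t, t)
  = ½ ‖2 (z₁ - z*) + (t + 2) z₂‖² + c (t + 2)² (L z₁ - L*)`, with `c = ζ² / M`, is nonincreasing
on `[1, ∞)`, and `E 1 = 9 V₁ (z 1, 1)`. Along the flow the momentum `2 (z₁ - z*) + (t + 2) z₂` has
derivative `-c (t + 2) ∇L y` at the extrapolated point `y = z₁ + β z₂`, `β = (t - 1) / (t + 2)`, so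
`E' = c (t + 2) (2 (L z₁ - L*) + (t + 2) ⟪∇L z₁, z₂⟫ - ⟪∇L y, 2 (z₁ - z*) + (t + 2) z₂⟫)`.
The tangent inequalities of the convex `L` at `y` (towards `z*` and `z₁`) and at `z₁` (towards `y`)
bound the bracket by `(t + 2 - 2β) (⟪∇L z₁, z₂⟫ - ⟪∇L y, z₂⟫)`, which is `≤ 0` since `2β ≤ t + 2`
and the gradient of a convex function is monotone. -/

open scoped RealInnerProductSpace

noncomputable section

open Set

section FirstOrder

variable {F : Type*} [NormedAddCommGroup F] [InnerProductSpace ℝ F] [CompleteSpace F]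

theorem HasGradientAt.comp_hasDerivAt {L : F → ℝ} {g : F} {z : ℝ → F} {z' : F} {s : ℝ}
    (hL : HasGradientAt L g (z s)) (hz : HasDerivAt z z' s) :
    HasDerivAt (fun r => L (z r)) ⟪g, z'⟫ s := by
  have h := (hasGradientAt_iff_hasFDerivAt.mp hL).comp_hasDerivAt s hz
  simp only [InnerProductSpace.toDual_apply_apply] at h
  exact h

theorem ConvexOn.add_inner_le_of_hasGradientAt {S : Set F} {L : F → ℝ} {g x y : F}
    (hconv : ConvexOn ℝ S L) (hx : x ∈ S) (hy : y ∈ S) (hg : HasGradientAt L g x) :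
    L x + ⟪g, y - x⟫ ≤ L y := by
  let γ : ℝ →ᵃ[ℝ] F := AffineMap.lineMap x y
  have hg₀ : HasGradientAt L g (γ 0) := by simpa [γ] using hg
  have hslope := (hconv.comp_affineMap γ).le_slope_of_hasDerivAt
    (x := 0) (y := 1) (by simpa [γ] using hx) (by simpa [γ] using hy) one_pos
    (hg₀.comp_hasDerivAt AffineMap.hasDerivAt_lineMap)
  simp only [slope_def_field, Function.comp_apply, γ, AffineMap.lineMap_apply_zero,
    AffineMap.lineMap_apply_one, sub_zero, div_one] at hslope
  linarith

theorem ConvexOn.nesterov_inner_gradient_le {L : F → ℝ} (hconv : ConvexOn ℝ univ L)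
    {x v z : F} {β τ : ℝ} (hx : DifferentiableAt ℝ L x)
    (hy : DifferentiableAt ℝ L (x + β • v)) (hβ : 0 < β) (hβτ : 2 * β ≤ τ) :
    2 * (L x - L z) + τ * ⟪gradient L x, v⟫
      ≤ ⟪gradient L (x + β • v), (2 : ℝ) • (x - z) + τ • v⟫ := by
  set y := x + β • v
  have tangent_y_z :=
    hconv.add_inner_le_of_hasGradientAt (mem_univ y) (mem_univ z) hy.hasGradientAt
  have tangent_x_y :=
    hconv.add_inner_le_of_hasGradientAt (mem_univ x) (mem_univ y) hx.hasGradientAt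
  have tangent_y_x :=
    hconv.add_inner_le_of_hasGradientAt (mem_univ y) (mem_univ x) hy.hasGradientAt
  have hyx : y - x = β • v := by simp [y]
  have hzy : z - y = -(x - z) - β • v := by simp only [y]; abel
  rw [hyx, real_inner_smul_right] at tangent_x_y
  rw [← neg_sub, hyx, inner_neg_right, real_inner_smul_right] at tangent_y_x
  rw [hzy, inner_sub_right, inner_neg_right, real_inner_smul_right] at tangent_y_z
  rw [inner_add_right, real_inner_smul_right, real_inner_smul_right]
  have gradient_monotone : ⟪gradient L x, v⟫ ≤ ⟪gradient L y, v⟫ :=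
    le_of_mul_le_mul_left (by linarith) hβ
  nlinarith [mul_le_mul_of_nonneg_left gradient_monotone (by linarith : 0 ≤ τ - 2 * β)]

end FirstOrder

section Nesterov

variable {F : Type*} [NormedAddCommGroup F] [InnerProductSpace ℝ F]
  {L : F → ℝ} {zs : F} {c : ℝ} {z₁ z₂ : ℝ → F}

def nesterovMomentum (zs : F) (z₁ z₂ : ℝ → F) (s : ℝ) : F :=
  (2 : ℝ) • (z₁ s - zs) + (s + 2) • z₂ s

def nesterovEnergy (L : F → ℝ) (zs : F) (c : ℝ) (z₁ z₂ : ℝ → F) (s : ℝ) : ℝ :=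
  ‖nesterovMomentum zs z₁ z₂ s‖ ^ 2 / 2 + c * (s + 2) ^ 2 * (L (z₁ s) - L zs)

theorem nesterovEnergy_eq (s : ℝ) (hs : s + 2 ≠ 0) :
    nesterovEnergy L zs c z₁ z₂ s
      = (s + 2) ^ 2 * ((1 / 2) * ‖(2 / (s + 2)) • (z₁ s - zs) + z₂ s‖ ^ 2
          + c * (L (z₁ s) - L zs)) := by
  have hmom : nesterovMomentum zs z₁ z₂ s = (s + 2) • ((2 / (s + 2)) • (z₁ s - zs) + z₂ s) := by
    rw [nesterovMomentum, smul_add, smul_smul, mul_div_cancel₀ _ hs]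
  rw [nesterovEnergy, hmom, norm_smul, mul_pow, Real.norm_eq_abs, sq_abs]
  ring

variable [CompleteSpace F]

def IsNesterovSolution (L : F → ℝ) (c : ℝ) (z₁ z₂ : ℝ → F) : Prop :=
  ∀ s, 0 ≤ s → HasDerivAt z₁ (z₂ s) s ∧
    HasDerivAt z₂ (-(3 / (s + 2)) • z₂ s - c • gradient L (z₁ s + ((s - 1) / (s + 2)) • z₂ s)) s

theorem hasDerivAt_nesterovMomentum (hsol : IsNesterovSolution L c z₁ z₂)
    {s : ℝ} (hs : 0 ≤ s) :
    HasDerivAt (nesterovMomentum zs z₁ z₂)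
      (-(c * (s + 2)) • gradient L (z₁ s + ((s - 1) / (s + 2)) • z₂ s)) s := by
  have hs2 : s + 2 ≠ 0 := by linarith
  obtain ⟨hz₁, hz₂⟩ := hsol s hs
  have h := ((hz₁.sub_const zs).const_smul (2 : ℝ)).add
    (((hasDerivAt_id' s).add_const 2).smul hz₂)
  refine h.congr_deriv ?_
  match_scalars
  · field_simp
    norm_num
  · ring

theorem hasDerivAt_nesterovEnergy (hd : Differentiable ℝ L)
    (hsol : IsNesterovSolution L c z₁ z₂)
    {s : ℝ} (hs : 0 ≤ s) :
    HasDerivAt (nesterovEnergy L zs c z₁ z₂)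
      (c * (s + 2) * (2 * (L (z₁ s) - L zs) + (s + 2) * ⟪gradient L (z₁ s), z₂ s⟫
        - ⟪gradient L (z₁ s + ((s - 1) / (s + 2)) • z₂ s), nesterovMomentum zs z₁ z₂ s⟫)) s := by
  have hmom := (hasDerivAt_nesterovMomentum (zs := zs) hsol hs).norm_sq.div_const 2
  have hscale : HasDerivAt (fun r : ℝ => c * (r + 2) ^ 2) (c * (2 * (s + 2))) s := by
    simpa using (((hasDerivAt_id s).add_const 2).pow 2).const_mul c
  have hL := ((hd (z₁ s)).hasGradientAt.comp_hasDerivAt (hsol s hs).1).sub_const (L zs)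
  refine (hmom.add (hscale.mul hL)).congr_deriv ?_
  rw [real_inner_smul_right, real_inner_comm]
  ring

theorem nesterovEnergy_antitoneOn (hconv : ConvexOn ℝ univ L) (hd : Differentiable ℝ L)
    (hc : 0 ≤ c) (hsol : IsNesterovSolution L c z₁ z₂) :
    AntitoneOn (nesterovEnergy L zs c z₁ z₂) (Ici 1) := by
  have hE := fun (s : ℝ) (hs : 1 ≤ s) =>
    hasDerivAt_nesterovEnergy (zs := zs) hd hsol (by linarith)
  refine antitoneOn_of_hasDerivWithinAt_nonpos (convex_Ici 1)
    (fun s hs => (hE s hs).continuousAt.continuousWithinAt)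
    (fun s hs => (hE s (interior_subset hs)).hasDerivWithinAt) ?_
  rw [interior_Ici]
  intro s (hs : 1 < s)
  have hβ : 0 < (s - 1) / (s + 2) := div_pos (by linarith) (by linarith)
  have hβτ : 2 * ((s - 1) / (s + 2)) ≤ s + 2 := by
    rw [← mul_div_assoc, div_le_iff₀ (by linarith)]
    nlinarith
  have key :=
    hconv.nesterov_inner_gradient_le (x := z₁ s) (v := z₂ s) (z := zs) (hd _) (hd _) hβ hβτ
  exact mul_nonpos_of_nonneg_of_nonpos (by positivity) (by unfold nesterovMomentum; linarith)

end Nesterov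

theorem nesterov_V1_decay_general {n : ℕ}
    (L : EuclideanSpace ℝ (Fin n) → ℝ)
    (hC1 : ContDiff ℝ 1 L)
    (hconv : ConvexOn ℝ Set.univ L)
    (zs : EuclideanSpace ℝ (Fin n))
    (M : ℝ) (hM : 0 < M)
    (ζ : ℝ)
    (z₁ z₂ : ℝ → EuclideanSpace ℝ (Fin n))
    (hz₁ : ∀ t, 0 ≤ t → HasDerivAt z₁ (z₂ t) t)
    (hz₂ : ∀ t, 0 ≤ t →
      HasDerivAt z₂
        (-((2 * (3 / (2 * (t + 2)))) • z₂ t)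
          - (ζ ^ 2 / M) • gradient L (z₁ t + ((t - 1) / (t + 2)) • z₂ t)) t) :
    ∀ t, 1 ≤ t →
      (1 / 2) * ‖(2 / (t + 2)) • (z₁ t - zs) + z₂ t‖ ^ 2
          + (ζ ^ 2 / M) * (L (z₁ t) - L zs)
        ≤ (9 / (t + 2) ^ 2)
            * ((1 / 2) * ‖(2 / ((1 : ℝ) + 2)) • (z₁ 1 - zs) + z₂ 1‖ ^ 2
              + (ζ ^ 2 / M) * (L (z₁ 1) - L zs)) := by
  intro t ht
  have hsol : IsNesterovSolution L (ζ ^ 2 / M) z₁ z₂ := fun s hs =>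
    ⟨hz₁ s hs, (hz₂ s hs).congr_deriv <| by
      rw [neg_smul, show 2 * (3 / (2 * (s + 2))) = 3 / (s + 2) by field_simp]⟩
  have hdecay := nesterovEnergy_antitoneOn (zs := zs) hconv (hC1.differentiable one_ne_zero)
    (by positivity) hsol (mem_Ici.mpr le_rfl) (mem_Ici.mpr ht) ht
  rw [nesterovEnergy_eq t (by linarith), nesterovEnergy_eq 1 (by norm_num)] at hdecay
  rw [show ((1 : ℝ) + 2) ^ 2 = 9 by norm_num] at hdecay
  rw [div_mul_eq_mul_div (9 : ℝ), le_div_iff₀ (by positivity), mul_comm]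
  exact hdecay

/-- Decay of the Nesterov Lyapunov function: every Nesterov solution satisfies
`V₁(z(t), t) ≤ (9/(t+2)²) V₁(z(1), 1)` for all `t ≥ 1`. -/
theorem nesterov_V1_decay {n : ℕ} (hn : 1 ≤ n)
    (L : EuclideanSpace ℝ (Fin n) → ℝ)
    (hC1 : ContDiff ℝ 1 L)
    (hconv : ConvexOn ℝ Set.univ L)
    (zs : EuclideanSpace ℝ (Fin n))
    (hmin : ∀ z, L zs ≤ L z)
    (huniq : ∀ z, (∀ y, L z ≤ L y) → z = zs)
    (M : ℝ) (hM : 0 < M)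
    (hLip : ∀ w u, ‖gradient L w - gradient L u‖ ≤ M * ‖w - u‖)
    (ζ : ℝ) (hζ : 0 < ζ)
    (z₁ z₂ : ℝ → EuclideanSpace ℝ (Fin n))
    (hz₁ : ∀ t, 0 ≤ t → HasDerivAt z₁ (z₂ t) t)
    (hz₂ : ∀ t, 0 ≤ t →
      HasDerivAt z₂
        (-((2 * (3 / (2 * (t + 2)))) • z₂ t)
          - (ζ ^ 2 / M) • gradient L (z₁ t + ((t - 1) / (t + 2)) • z₂ t)) t) :
    ∀ t, 1 ≤ t →
      (1 / 2) * ‖(2 / (t + 2)) • (z₁ t - zs) + z₂ t‖ ^ 2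
          + (ζ ^ 2 / M) * (L (z₁ t) - L zs)
        ≤ (9 / (t + 2) ^ 2)
            * ((1 / 2) * ‖(2 / ((1 : ℝ) + 2)) • (z₁ 1 - zs) + z₂ 1‖ ^ 2
              + (ζ ^ 2 / M) * (L (z₁ 1) - L zs)) :=
  nesterov_V1_decay_general L hC1 hconv zs M hM ζ z₁ z₂ hz₁ hz₂
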